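/- arXiv:math/0211044 — 4 statements merged into one kernel-verified Lean document; each statement's English description precedes it below -/
import Mathlib

section
/- Let R be a commutative ring and let ζ ∈ R satisfy ζ^m = 1 for some integer m ≥ 1. The ring homomorphism ℤ[q] → R[[t]] sending q to ζ + t maps (q;q)_n into the ideal (t^{⌊n/m⌋}) for every n, and hence induces a ring homomorphism ι_ζ : Ẑ[q]^ → R[[t]] ≅ lim_n R[t]/(t^{⌊n/m⌋}), characterized by the property that for every n the composite of ι_ζ with reduction modulo t^{⌊n/m⌋} equals the composite of π_n with the induced map ℤ[q]/((q;q)_n) → R[t]/(t^{⌊n/m⌋}). In particular ι_ζ ∘ η : ℤ[q] → R[[t]] is the evaluation q ↦ ζ + t. -/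
open Polynomial

/-- `(q;q)_n = ∏_{i=1}^n (q^i - 1)` in `ℤ[q]`. -/
noncomputable def qPoch (n : ℕ) : Polynomial ℤ :=
  ∏ i ∈ Finset.range n, (X ^ (i + 1) - 1)

lemma qPoch_dvd_succ (n : ℕ) : qPoch n ∣ qPoch (n + 1) :=
  ⟨X ^ (n + 1) - 1, by rw [qPoch, qPoch, Finset.prod_range_succ]⟩

/-- The canonical projection `ℤ[q]/((q;q)_{n+1}) → ℤ[q]/((q;q)_n)`. -/
noncomputable def habiroTrans (n : ℕ) :
    (Polynomial ℤ ⧸ Ideal.span {qPoch (n + 1)}) →+* Polynomial ℤ ⧸ Ideal.span {qPoch n} :=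
  Ideal.Quotient.factor
    (Ideal.span_singleton_le_span_singleton.mpr (qPoch_dvd_succ n))

/-- The Habiro ring `lim_n ℤ[q]/((q;q)_n)`, realized as the subring of compatible
sequences in `∏_n ℤ[q]/((q;q)_n)`. -/
noncomputable def HabiroRing : Subring (∀ n : ℕ, Polynomial ℤ ⧸ Ideal.span {qPoch n}) where
  carrier := {x | ∀ n, habiroTrans n (x (n + 1)) = x n}
  mul_mem' {a b} ha hb n := by
    simp only [Pi.mul_apply, map_mul, ha n, hb n]
  one_mem' n := by simp only [Pi.one_apply, map_one]
  add_mem' {a b} ha hb n := by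
    simp only [Pi.add_apply, map_add, ha n, hb n]
  zero_mem' n := by simp only [Pi.zero_apply, map_zero]
  neg_mem' {a} ha n := by simp only [Pi.neg_apply, map_neg, ha n]

/-- The canonical map `η : ℤ[q] → Ẑ[q]^`. -/
noncomputable def habiroEta : Polynomial ℤ →+* HabiroRing :=
  RingHom.codRestrict (Pi.ringHom fun n => Ideal.Quotient.mk (Ideal.span {qPoch n}))
    HabiroRing (fun _ _ => Ideal.Quotient.factor_mk _ _)

/-- The projection `π_n : Ẑ[q]^ → ℤ[q]/((q;q)_n)`. -/
noncomputable def habiroPi (n : ℕ) : HabiroRing →+* Polynomial ℤ ⧸ Ideal.span {qPoch n} :=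
  (Pi.evalRingHom _ n).comp HabiroRing.subtype

/-- The evaluation `ℤ[q] → R[[t]]`, `q ↦ ζ + t`. -/
noncomputable def evalZetaPlusT (R : Type*) [CommRing R] (ζ : R) :
    Polynomial ℤ →+* PowerSeries R :=
  Polynomial.eval₂RingHom (Int.castRingHom (PowerSeries R))
    (PowerSeries.C ζ + PowerSeries.X)


/-!
The factor `q^i - 1` of `(q;q)_n` is sent to `(ζ + t)^i - 1`, which has constant term
`ζ^i - 1 = 0` whenever `m ∣ i`; there are `⌊n/m⌋` such `i ≤ n`, so `t^⌊n/m⌋` divides the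
image of `(q;q)_n`. Consequently the `k`-th coefficient of the image of any lift of
`π_n x` to `ℤ[q]` does not depend on the lift once `k < ⌊n/m⌋`, and by compatibility of the
`π_n` not on `n` either. These stable coefficients define `ι_ζ x`; it is a ring
homomorphism and is unique because a power series is determined by its reductions modulo
all `t^j`. Only the fact that `(q;q)_n` maps into `(t^{d n})` with `d n → ∞` is used, so the
extension is built for any such `φ : ℤ[q] → R⟦t⟧`.
-/

open Filter

theorem qPoch_eq_prod_Ioc (n : ℕ) : qPoch n = ∏ i ∈ Finset.Ioc 0 n, (X ^ i - 1 : ℤ[X]) := by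
  rw [qPoch, Finset.range_eq_Ico, Finset.prod_Ico_add' (fun i => (X ^ i - 1 : ℤ[X])),
    ← Finset.Ico_add_one_add_one_eq_Ioc]

section EvalZetaPlusT

variable {R : Type*} [CommRing R] {ζ : R}

theorem X_dvd_evalZetaPlusT_X_pow_sub_one {i : ℕ} (hi : ζ ^ i = 1) :
    PowerSeries.X ∣ evalZetaPlusT R ζ (X ^ i - 1) := by
  rw [PowerSeries.X_dvd_iff]
  simp [evalZetaPlusT, hi]

theorem evalZetaPlusT_qPoch_mem_span {m : ℕ} (hζ : ζ ^ m = 1) (n : ℕ) :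
    evalZetaPlusT R ζ (qPoch n) ∈ Ideal.span {(PowerSeries.X : PowerSeries R) ^ (n / m)} := by
  rw [Ideal.mem_span_singleton, qPoch_eq_prod_Ioc, map_prod,
    ← Nat.Ioc_filter_dvd_card_eq_div n m, ← Finset.prod_const]
  calc ∏ _ ∈ Finset.Ioc 0 n with m ∣ _, PowerSeries.X
      ∣ ∏ i ∈ Finset.Ioc 0 n with m ∣ i, evalZetaPlusT R ζ (X ^ i - 1) := by
        refine Finset.prod_dvd_prod_of_dvd _ _ fun i hi => ?_
        obtain ⟨c, rfl⟩ := (Finset.mem_filter.mp hi).2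
        exact X_dvd_evalZetaPlusT_X_pow_sub_one (by rw [pow_mul, hζ, one_pow])
    _ ∣ _ := Finset.prod_dvd_prod_of_subset _ _ _ (Finset.filter_subset _ _)

end EvalZetaPlusT

namespace PowerSeries

variable {R : Type*} [CommRing R]

theorem coeff_eq_of_mk_X_pow_eq {a b : PowerSeries R} {j k : ℕ}
    (h : Ideal.Quotient.mk (Ideal.span {X ^ j}) a = Ideal.Quotient.mk (Ideal.span {X ^ j}) b)
    (hk : k < j) :
    coeff k a = coeff k b := by
  rw [Ideal.Quotient.eq, Ideal.mem_span_singleton, X_pow_dvd_iff] at h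
  simpa [sub_eq_zero] using h k hk

theorem eq_of_forall_mk_X_pow_eq {d : ℕ → ℕ} (hd : Tendsto d atTop atTop) {a b : PowerSeries R}
    (h : ∀ n, Ideal.Quotient.mk (Ideal.span {X ^ d n}) a =
      Ideal.Quotient.mk (Ideal.span {X ^ d n}) b) :
    a = b :=
  ext fun k =>
    let ⟨n, hn⟩ := (hd.eventually_gt_atTop k).exists
    coeff_eq_of_mk_X_pow_eq (h n) hn

end PowerSeries

theorem habiroPi_eq_mk_of_le {n n' : ℕ} (h : n ≤ n') {x : HabiroRing} {f : ℤ[X]}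
    (hf : habiroPi n' x = Ideal.Quotient.mk _ f) : habiroPi n x = Ideal.Quotient.mk _ f := by
  induction n', h using Nat.le_induction with
  | base => exact hf
  | succ n' _ ih =>
    exact ih <| (x.2 n').symm.trans <|
      (congrArg (habiroTrans n') hf).trans (Ideal.Quotient.factor_mk _ _)

section HabiroExtend

variable {R : Type*} [CommRing R] {φ : ℤ[X] →+* PowerSeries R} {d : ℕ → ℕ}

noncomputable def qPochQuotientMap
    (hφ : ∀ n, φ (qPoch n) ∈ Ideal.span {(PowerSeries.X : PowerSeries R) ^ d n}) (n : ℕ) :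
    ℤ[X] ⧸ Ideal.span {qPoch n} →+*
      PowerSeries R ⧸ Ideal.span {(PowerSeries.X : PowerSeries R) ^ d n} :=
  Ideal.quotientMap _ φ ((Ideal.span_singleton_le_iff_mem _).mpr (hφ n))

theorem qPochQuotientMap_mk
    (hφ : ∀ n, φ (qPoch n) ∈ Ideal.span {(PowerSeries.X : PowerSeries R) ^ d n}) {n : ℕ}
    (f : ℤ[X]) :
    qPochQuotientMap hφ n (Ideal.Quotient.mk _ f) = Ideal.Quotient.mk _ (φ f) :=
  Ideal.quotientMap_mk

theorem coeff_map_eq_of_mk_eq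
    (hφ : ∀ n, φ (qPoch n) ∈ Ideal.span {(PowerSeries.X : PowerSeries R) ^ d n}) {n k : ℕ}
    (hk : k < d n) {f g : ℤ[X]}
    (h : Ideal.Quotient.mk (Ideal.span {qPoch n}) f = Ideal.Quotient.mk _ g) :
    PowerSeries.coeff k (φ f) = PowerSeries.coeff k (φ g) := by
  refine PowerSeries.coeff_eq_of_mk_X_pow_eq ?_ hk
  rw [← qPochQuotientMap_mk hφ, ← qPochQuotientMap_mk hφ, h]

/-- The `k`-th coefficient is read off from an arbitrary lift of `π_n x` for an `n` with
`k < d n`. -/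
noncomputable def habiroExtendFun (φ : ℤ[X] →+* PowerSeries R) (hd : Tendsto d atTop atTop)
    (x : HabiroRing) : PowerSeries R :=
  PowerSeries.mk fun k => PowerSeries.coeff k <|
    φ (Function.surjInv Ideal.Quotient.mk_surjective
      (habiroPi (hd.eventually_gt_atTop k).exists.choose x))

theorem coeff_habiroExtendFun
    (hφ : ∀ n, φ (qPoch n) ∈ Ideal.span {(PowerSeries.X : PowerSeries R) ^ d n})
    (hd : Tendsto d atTop atTop) {n k : ℕ} (hk : k < d n) {x : HabiroRing} {f : ℤ[X]}
    (hf : habiroPi n x = Ideal.Quotient.mk _ f) :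
    PowerSeries.coeff k (habiroExtendFun φ hd x) = PowerSeries.coeff k (φ f) := by
  have hk₀ := (hd.eventually_gt_atTop k).exists.choose_spec
  set n₀ := (hd.eventually_gt_atTop k).exists.choose
  obtain ⟨g, hg⟩ := Ideal.Quotient.mk_surjective (habiroPi (max n n₀) x)
  rw [habiroExtendFun, PowerSeries.coeff_mk]
  calc _ = PowerSeries.coeff k (φ g) := coeff_map_eq_of_mk_eq hφ hk₀ <| by
        rw [Function.surjInv_eq Ideal.Quotient.mk_surjective,
          habiroPi_eq_mk_of_le (le_max_right _ _) hg.symm]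
    _ = PowerSeries.coeff k (φ f) := (coeff_map_eq_of_mk_eq hφ hk <| by
        rw [← hf, habiroPi_eq_mk_of_le (le_max_left _ _) hg.symm]).symm

variable (hφ : ∀ n, φ (qPoch n) ∈ Ideal.span {(PowerSeries.X : PowerSeries R) ^ d n})
  (hd : Tendsto d atTop atTop)

theorem mk_habiroExtendFun (n : ℕ) (x : HabiroRing) :
    Ideal.Quotient.mk _ (habiroExtendFun φ hd x) = qPochQuotientMap hφ n (habiroPi n x) := by
  obtain ⟨f, hf⟩ := Ideal.Quotient.mk_surjective (habiroPi n x)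
  rw [← hf, qPochQuotientMap_mk, Ideal.Quotient.eq, Ideal.mem_span_singleton,
    PowerSeries.X_pow_dvd_iff]
  intro k hk
  rw [map_sub, coeff_habiroExtendFun hφ hd hk hf.symm, sub_self]

noncomputable def habiroExtend : HabiroRing →+* PowerSeries R where
  toFun := habiroExtendFun φ hd
  map_one' := PowerSeries.eq_of_forall_mk_X_pow_eq hd fun n => by
    simp only [mk_habiroExtendFun hφ hd, map_one]
  map_mul' x y := PowerSeries.eq_of_forall_mk_X_pow_eq hd fun n => by
    simp only [mk_habiroExtendFun hφ hd, map_mul]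
  map_zero' := PowerSeries.eq_of_forall_mk_X_pow_eq hd fun n => by
    simp only [mk_habiroExtendFun hφ hd, map_zero]
  map_add' x y := PowerSeries.eq_of_forall_mk_X_pow_eq hd fun n => by
    simp only [mk_habiroExtendFun hφ hd, map_add]

theorem habiroExtend_sub_mem_span {n : ℕ} {x : HabiroRing} {f : ℤ[X]}
    (hf : habiroPi n x = Ideal.Quotient.mk _ f) :
    habiroExtend hφ hd x - φ f ∈ Ideal.span {PowerSeries.X ^ d n} := by
  rw [← Ideal.Quotient.eq, ← qPochQuotientMap_mk hφ, ← hf]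
  exact mk_habiroExtendFun hφ hd n x

theorem eq_habiroExtend {ι : HabiroRing →+* PowerSeries R}
    (hι : ∀ (n : ℕ) (x : HabiroRing) (f : ℤ[X]), habiroPi n x = Ideal.Quotient.mk _ f →
      ι x - φ f ∈ Ideal.span {PowerSeries.X ^ d n}) :
    ι = habiroExtend hφ hd := by
  ext1 x
  refine PowerSeries.eq_of_forall_mk_X_pow_eq hd fun n => ?_
  obtain ⟨f, hf⟩ := Ideal.Quotient.mk_surjective (habiroPi n x)
  rw [Ideal.Quotient.eq.mpr (hι n x f hf.symm),
    Ideal.Quotient.eq.mpr (habiroExtend_sub_mem_span hφ hd hf.symm)]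

theorem habiroExtend_habiroEta (f : ℤ[X]) : habiroExtend hφ hd (habiroEta f) = φ f :=
  PowerSeries.eq_of_forall_mk_X_pow_eq hd fun n =>
    Ideal.Quotient.eq.mpr (habiroExtend_sub_mem_span hφ hd (n := n) rfl)

end HabiroExtend

/-- For `ζ ∈ R` with `ζ^m = 1`, `m ≥ 1`, the homomorphism
`ℤ[q] → R[[t]]`, `q ↦ ζ + t`, maps `(q;q)_n` into `(t^⌊n/m⌋)` for every `n`; hence it
induces a ring homomorphism `ι_ζ : Ẑ[q]^ → R[[t]]` characterized by compatibility with
the projections `π_n` modulo `t^⌊n/m⌋`; in particular `ι_ζ ∘ η` is evaluation `q ↦ ζ + t`. -/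
theorem habiro_iota_zeta (R : Type*) [CommRing R] (ζ : R) (m : ℕ) (hm : 1 ≤ m)
    (hζ : ζ ^ m = 1) :
    (∀ n : ℕ, evalZetaPlusT R ζ (qPoch n) ∈
      Ideal.span {(PowerSeries.X : PowerSeries R) ^ (n / m)}) ∧
    ∃ ι : HabiroRing →+* PowerSeries R,
      (∀ (n : ℕ) (x : HabiroRing) (f : Polynomial ℤ),
        habiroPi n x = Ideal.Quotient.mk (Ideal.span {qPoch n}) f →
        ι x - evalZetaPlusT R ζ f ∈
          Ideal.span {(PowerSeries.X : PowerSeries R) ^ (n / m)}) ∧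
      (∀ ι' : HabiroRing →+* PowerSeries R,
        (∀ (n : ℕ) (x : HabiroRing) (f : Polynomial ℤ),
          habiroPi n x = Ideal.Quotient.mk (Ideal.span {qPoch n}) f →
          ι' x - evalZetaPlusT R ζ f ∈
            Ideal.span {(PowerSeries.X : PowerSeries R) ^ (n / m)}) →
        ι' = ι) ∧
      (∀ f : Polynomial ℤ, ι (habiroEta f) = evalZetaPlusT R ζ f) := by
  have hφ := evalZetaPlusT_qPoch_mem_span hζ
  have hd : Tendsto (· / m) atTop atTop := Nat.tendsto_div_const_atTop (by omega)
  exact ⟨hφ, habiroExtend hφ hd, fun _ _ _ => habiroExtend_sub_mem_span hφ hd,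
    fun _ => eq_habiroExtend hφ hd, habiroExtend_habiroEta hφ hd⟩
end

section
/- For every m ≥ 0, the ℤ[v,v^{−1}]-submodule 𝓡_m of ℚ(v)[x] spanned by {P′_k : k ≥ m} is an ideal of the ℤ[v,v^{−1}]-subalgebra 𝓡 of ℚ(v)[x] generated by the elements P′_n (n ≥ 1): for every y ∈ 𝓡 and every k ≥ m, the product y · P′_k is a ℤ[v,v^{−1}]-linear combination of finitely many elements P′_j with j ≥ m. -/
/-- The quantum integer `[n] = (v^n − v^{−n})/(v − v^{−1})` in `ℚ(v)`. -/
noncomputable def qInt (n : ℕ) : RatFunc ℚ :=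
  (RatFunc.X ^ n - (RatFunc.X)⁻¹ ^ n) / (RatFunc.X - (RatFunc.X)⁻¹)

/-- The quantum factorial `[n]! = [1][2]⋯[n]` in `ℚ(v)`. -/
noncomputable def qFact (n : ℕ) : RatFunc ℚ :=
  ∏ i ∈ Finset.Icc 1 n, qInt i

/-- `P_n = ∏_{i=0}^{n−1} (x − v^{2i+1} − v^{−2i−1})` in `ℚ(v)[x]`. -/
noncomputable def Pbasis (n : ℕ) : Polynomial (RatFunc ℚ) :=
  ∏ i ∈ Finset.range n,
    (Polynomial.X - Polynomial.C (RatFunc.X ^ (2 * i + 1) + (RatFunc.X)⁻¹ ^ (2 * i + 1)))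

/-- `P′_n = P_n / ((v − v^{−1})^n [n]!)` in `ℚ(v)[x]`. -/
noncomputable def Pbasis' (n : ℕ) : Polynomial (RatFunc ℚ) :=
  Polynomial.C (((RatFunc.X - (RatFunc.X)⁻¹) ^ n * qFact n)⁻¹) * Pbasis n

/-- The copy of `ℤ[v,v^{−1}]` inside `ℚ(v)`, namely the subring generated by `v`
and `v^{−1}`. -/
noncomputable def ZLaurent : Subring (RatFunc ℚ) :=
  Subring.closure {RatFunc.X, (RatFunc.X)⁻¹}

/-- `inSpanP' S f` says that `f ∈ ℚ(v)[x]` is a `ℤ[v,v^{−1}]`-linear combination of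
finitely many of the `P′_k` with `k ∈ S`. -/
noncomputable def inSpanP' (S : Set ℕ) (f : Polynomial (RatFunc ℚ)) : Prop :=
  ∃ (s : Finset ℕ) (c : ℕ → ZLaurent), ↑s ⊆ S ∧
    f = ∑ k ∈ s, Polynomial.C ((c k : RatFunc ℚ)) * Pbasis' k

/-- The `ℤ[v,v^{−1}]`-subalgebra `𝓡` of `ℚ(v)[x]` generated by the `P′_n`, `n ≥ 1`,
realized as the subring generated by the constants `ℤ[v,v^{−1}]` together with the
`P′_n`, `n ≥ 1`. -/
noncomputable def Ralg : Subring (Polynomial (RatFunc ℚ)) :=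
  Subring.closure
    ((Polynomial.C '' (ZLaurent : Set (RatFunc ℚ))) ∪ {f | ∃ n : ℕ, 1 ≤ n ∧ f = Pbasis' n})

/-!
Writing `ρ_i = v^{2i+1} + v^{-2i-1}` for the roots of `P_n`, the basis satisfies the three-term
recursion `(x - ρ_n) P′_{n+d} = (v - v⁻¹)[n+d+1] P′_{n+d+1} + (v - v⁻¹)²[d][2n+d+1] P′_{n+d}`
(from `ρ_{n+d} - ρ_n = (v - v⁻¹)²[d][2n+d+1]`). Induction on `n` turns it into the product formula
`P′_n P′_k = ∑_{i ≤ n} (v - v⁻¹)^i [n+k]! / ([i]! [n-i]! [k-i]!) · P′_{n+k-i}` for `n ≤ k`, the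
inductive step reducing to `[d+i][e+i] = [d][e] + [i][d+e+i]`.
Each coefficient is `(v - v⁻¹)^i [i]!` times three Gaussian binomials, so lies in `ℤ[v,v⁻¹]`.
Hence every `P′_n`, and then every element of `𝓡`, maps `𝓡_m` into itself.
-/

open Polynomial

local notation "K" => RatFunc ℚ
local notation "v" => (RatFunc.X : RatFunc ℚ)
local notation "δ" => (RatFunc.X - (RatFunc.X : RatFunc ℚ)⁻¹)

lemma X_pow_ne_one {n : ℕ} (hn : 0 < n) : v ^ n ≠ 1 := by
  intro h
  have : (Polynomial.X : ℚ[X]) ^ n = 1 := by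
    apply RatFunc.algebraMap_injective ℚ
    simpa using h
  simpa [hn.ne'] using congrArg natDegree this

lemma X_pow_mul_X_inv_pow (n : ℕ) : v ^ n * v⁻¹ ^ n = 1 := by
  rw [← mul_pow, mul_inv_cancel₀ RatFunc.X_ne_zero, one_pow]

lemma delta_ne_zero : δ ≠ 0 := by
  intro h
  apply X_pow_ne_one two_pos
  linear_combination v * h + X_pow_mul_X_inv_pow 1

lemma qInt_mul_delta (n : ℕ) : qInt n * δ = v ^ n - v⁻¹ ^ n :=
  div_mul_cancel₀ _ delta_ne_zero

lemma qInt_ne_zero {n : ℕ} (hn : 0 < n) : qInt n ≠ 0 := by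
  intro h
  apply X_pow_ne_one (Nat.mul_pos two_pos hn)
  linear_combination v ^ n * (qInt_mul_delta n).symm + v ^ n * h * δ + X_pow_mul_X_inv_pow n

lemma qInt_zero : qInt 0 = 0 := by simp [qInt]

lemma qInt_succ (n : ℕ) : qInt (n + 1) = v * qInt n + v⁻¹ ^ n := by
  apply mul_right_cancel₀ delta_ne_zero
  linear_combination qInt_mul_delta (n + 1) - v * qInt_mul_delta n

lemma qInt_add_add_one (a b : ℕ) :
    qInt (a + b + 1) = v ^ (a + 1) * qInt b + v⁻¹ ^ b * qInt (a + 1) := by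
  apply mul_right_cancel₀ delta_ne_zero
  linear_combination qInt_mul_delta (a + b + 1) - v ^ (a + 1) * qInt_mul_delta b
    - v⁻¹ ^ b * qInt_mul_delta (a + 1)

lemma qInt_add_mul_qInt_add (d e i : ℕ) :
    qInt (d + i) * qInt (e + i) = qInt d * qInt e + qInt i * qInt (d + e + i) := by
  apply mul_right_cancel₀ (mul_ne_zero delta_ne_zero delta_ne_zero)
  linear_combination (qInt (e + i) * δ) * qInt_mul_delta (d + i)
    + (v ^ (d + i) - v⁻¹ ^ (d + i)) * qInt_mul_delta (e + i)
    - (qInt e * δ) * qInt_mul_delta d - (v ^ d - v⁻¹ ^ d) * qInt_mul_delta e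
    - (qInt (d + e + i) * δ) * qInt_mul_delta i - (v ^ i - v⁻¹ ^ i) * qInt_mul_delta (d + e + i)
    + (v⁻¹ ^ (d + e) + v ^ (d + e) - v ^ d * v⁻¹ ^ e - v ^ e * v⁻¹ ^ d) * X_pow_mul_X_inv_pow i

lemma qFact_zero : qFact 0 = 1 := by simp [qFact]

lemma qFact_succ (n : ℕ) : qFact (n + 1) = qFact n * qInt (n + 1) := by
  rw [qFact, qFact, Finset.prod_Icc_succ_top (Nat.le_add_left 1 n)]

lemma qFact_ne_zero (n : ℕ) : qFact n ≠ 0 := by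
  induction n with
  | zero => simp [qFact_zero]
  | succ n ih => rw [qFact_succ]; exact mul_ne_zero ih (qInt_ne_zero n.succ_pos)

lemma X_mem_ZLaurent : v ∈ ZLaurent := Subring.subset_closure (by simp)

lemma X_inv_mem_ZLaurent : v⁻¹ ∈ ZLaurent := Subring.subset_closure (by simp)

lemma qInt_mem_ZLaurent (n : ℕ) : qInt n ∈ ZLaurent := by
  induction n with
  | zero => rw [qInt_zero]; exact zero_mem _
  | succ n ih =>
    rw [qInt_succ]
    exact add_mem (mul_mem X_mem_ZLaurent ih) (pow_mem X_inv_mem_ZLaurent n)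

lemma qFact_mem_ZLaurent (n : ℕ) : qFact n ∈ ZLaurent := by
  induction n with
  | zero => rw [qFact_zero]; exact one_mem _
  | succ n ih => rw [qFact_succ]; exact mul_mem ih (qInt_mem_ZLaurent _)

/-- `qBinom a b` is the Gaussian binomial coefficient `[a+b]! / ([a]! [b]!)`. -/
noncomputable def qBinom : ℕ → ℕ → K
  | 0, _ => 1
  | _, 0 => 1
  | a + 1, b + 1 => v ^ (a + 1) * qBinom (a + 1) b + v⁻¹ ^ (b + 1) * qBinom a (b + 1)

lemma qBinom_mul_qFact_mul_qFact (a b : ℕ) :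
    qBinom a b * (qFact a * qFact b) = qFact (a + b) := by
  induction a, b using qBinom.induct with
  | case1 b => simp [qBinom, qFact_zero]
  | case2 a h => simp [qBinom, qFact_zero]
  | case3 a b ih₁ ih₂ =>
    rw [show a + 1 + b = a + (b + 1) by ring, qFact_succ a] at ih₁
    rw [qFact_succ b] at ih₂
    rw [qBinom, show a + 1 + (b + 1) = a + (b + 1) + 1 by ring, qFact_succ (a + (b + 1)),
      qInt_add_add_one, qFact_succ a, qFact_succ b]
    linear_combination v ^ (a + 1) * qInt (b + 1) * ih₁ + v⁻¹ ^ (b + 1) * qInt (a + 1) * ih₂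

lemma qBinom_mem_ZLaurent (a b : ℕ) : qBinom a b ∈ ZLaurent := by
  induction a, b using qBinom.induct with
  | case1 b => rw [qBinom]; exact one_mem _
  | case2 a h => rw [qBinom.eq_2 a h]; exact one_mem _
  | case3 a b ih₁ ih₂ =>
    rw [qBinom]
    exact add_mem (mul_mem (pow_mem X_mem_ZLaurent _) ih₁)
      (mul_mem (pow_mem X_inv_mem_ZLaurent _) ih₂)

/-- For `n = i + a` and `k = i + b`, `prodCoeff i a b` is the coefficient of `P′_{n+k-i}` in
`P′_n P′_k`. -/
noncomputable def prodCoeff (i a b : ℕ) : K :=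
  δ ^ i * qFact (i + a + (i + b)) / (qFact i * qFact a * qFact b)

lemma prodCoeff_eq_qBinom (i a b : ℕ) :
    prodCoeff i a b = δ ^ i * qFact i * (qBinom i a * qBinom i b * qBinom (i + a) (i + b)) := by
  rw [prodCoeff, div_eq_iff (by simp [qFact_ne_zero]), ← qBinom_mul_qFact_mul_qFact (i + a),
    ← qBinom_mul_qFact_mul_qFact i a, ← qBinom_mul_qFact_mul_qFact i b]
  ring

lemma prodCoeff_mem_ZLaurent (i a b : ℕ) : prodCoeff i a b ∈ ZLaurent := by
  rw [prodCoeff_eq_qBinom]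
  exact mul_mem (mul_mem (pow_mem (sub_mem X_mem_ZLaurent X_inv_mem_ZLaurent) i)
    (qFact_mem_ZLaurent i))
    (mul_mem (mul_mem (qBinom_mem_ZLaurent _ _) (qBinom_mem_ZLaurent _ _))
      (qBinom_mem_ZLaurent _ _))

lemma prodCoeff_zero_succ (a b : ℕ) :
    δ * qInt (a + 1) * prodCoeff 0 (a + 1) b = prodCoeff 0 a b * (δ * qInt (a + b + 1)) := by
  simp only [prodCoeff, zero_add, pow_zero, qFact_zero, one_mul]
  rw [show a + 1 + b = a + b + 1 by ring, qFact_succ (a + b), qFact_succ a]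
  have := qInt_ne_zero a.succ_pos
  have := qFact_ne_zero a
  have := qFact_ne_zero b
  field_simp

lemma prodCoeff_succ_zero (i b : ℕ) :
    δ * qInt (i + 1) * prodCoeff (i + 1) 0 b
      = prodCoeff i 0 (b + 1) * (δ ^ 2 * qInt (b + 1) * qInt (2 * i + b + 2)) := by
  simp only [prodCoeff, add_zero, qFact_zero, mul_one]
  rw [show i + 1 + (i + 1 + b) = 2 * i + b + 1 + 1 by ring,
    show i + (i + (b + 1)) = 2 * i + b + 1 by ring, qFact_succ (2 * i + b + 1), qFact_succ i,
    qFact_succ b]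
  have := qInt_ne_zero i.succ_pos
  have := qInt_ne_zero b.succ_pos
  have := qFact_ne_zero i
  have := qFact_ne_zero b
  field_simp
  ring

lemma prodCoeff_succ_succ (i a b : ℕ) :
    δ * qInt (i + a + 2) * prodCoeff (i + 1) (a + 1) b
      = prodCoeff (i + 1) a b * (δ * qInt (i + a + b + 2))
        + prodCoeff i (a + 1) (b + 1) * (δ ^ 2 * qInt (b + 1) * qInt (2 * i + 2 * a + b + 4)) := by
  have key := qInt_add_mul_qInt_add (a + 1) (i + a + b + 2) (i + 1)
  rw [show a + 1 + (i + 1) = i + a + 2 by ring,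
    show i + a + b + 2 + (i + 1) = 2 * i + a + b + 2 + 1 by ring,
    show a + 1 + (i + a + b + 2) + (i + 1) = 2 * i + 2 * a + b + 4 by ring] at key
  simp only [prodCoeff]
  rw [show i + 1 + (a + 1) + (i + 1 + b) = 2 * i + a + b + 2 + 1 by ring,
    show i + 1 + a + (i + 1 + b) = 2 * i + a + b + 2 by ring,
    show i + (a + 1) + (i + (b + 1)) = 2 * i + a + b + 2 by ring,
    qFact_succ (2 * i + a + b + 2), qFact_succ i, qFact_succ a, qFact_succ b]
  have := qInt_ne_zero i.succ_pos
  have := qInt_ne_zero a.succ_pos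
  have := qInt_ne_zero b.succ_pos
  have := qFact_ne_zero i
  have := qFact_ne_zero a
  have := qFact_ne_zero b
  have hδ := delta_ne_zero
  -- with `δ` kept atomic, `field_simp` does not clear the `v⁻¹` inside it
  generalize δ = d at hδ ⊢
  field_simp
  linear_combination d ^ (i + 1) * qFact (2 * i + a + b + 2) * key

lemma Finset.sum_range_succ_succ_of_pascal {M : Type*} [AddCommMonoid M] (n : ℕ)
    {f g h : ℕ → M} (h_zero : f 0 = g 0) (h_succ : ∀ i < n, f (i + 1) = g (i + 1) + h i)
    (h_last : f (n + 1) = h n) :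
    ∑ i ∈ range (n + 2), f i = ∑ i ∈ range (n + 1), g i + ∑ i ∈ range (n + 1), h i := by
  rw [Finset.sum_range_succ' f (n + 1), Finset.sum_range_succ _ n, h_last, h_zero,
    Finset.sum_congr rfl (fun i hi => h_succ i (Finset.mem_range.1 hi)), Finset.sum_add_distrib,
    Finset.sum_range_succ' g, Finset.sum_range_succ h]
  abel

noncomputable def Proot (i : ℕ) : K := v ^ (2 * i + 1) + v⁻¹ ^ (2 * i + 1)

lemma Pbasis_succ (n : ℕ) : Pbasis (n + 1) = Pbasis n * (X - C (Proot n)) :=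
  Finset.prod_range_succ _ n

lemma Pbasis'_zero : Pbasis' 0 = 1 := by simp [Pbasis', Pbasis, qFact_zero]

lemma Proot_add_sub_Proot (n d : ℕ) :
    Proot (n + d) - Proot n = δ ^ 2 * qInt d * qInt (2 * n + d + 1) := by
  rw [Proot, Proot]
  linear_combination -(qInt (2 * n + d + 1) * δ) * qInt_mul_delta d
    - (v ^ d - v⁻¹ ^ d) * qInt_mul_delta (2 * n + d + 1)
    + (v⁻¹ ^ (2 * n + 1) + v ^ (2 * n + 1)) * X_pow_mul_X_inv_pow d

lemma X_sub_C_Proot_mul_Pbasis' (n : ℕ) :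
    (X - C (Proot n)) * Pbasis' n = C (δ * qInt (n + 1)) * Pbasis' (n + 1) := by
  have h : δ * qInt (n + 1) * (δ ^ (n + 1) * qFact (n + 1))⁻¹ = (δ ^ n * qFact n)⁻¹ := by
    have hδ := delta_ne_zero
    have := qFact_ne_zero n
    have := qInt_ne_zero n.succ_pos
    rw [qFact_succ]
    generalize δ = d at hδ ⊢
    field_simp
    ring
  rw [Pbasis', Pbasis', Pbasis_succ, ← h, C_mul, C_mul]
  ring

lemma X_sub_C_Proot_mul_Pbasis'_add (n d : ℕ) :
    (X - C (Proot n)) * Pbasis' (n + d)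
      = C (δ * qInt (n + d + 1)) * Pbasis' (n + d + 1)
        + C (δ ^ 2 * qInt d * qInt (2 * n + d + 1)) * Pbasis' (n + d) := by
  rw [← X_sub_C_Proot_mul_Pbasis', ← Proot_add_sub_Proot, C_sub]
  ring

theorem Pbasis'_mul_Pbasis' {n k : ℕ} (h : n ≤ k) :
    Pbasis' n * Pbasis' k
      = ∑ i ∈ Finset.range (n + 1), C (prodCoeff i (n - i) (k - i)) * Pbasis' (n + k - i) := by
  induction n with
  | zero => simp [prodCoeff, qFact_zero, qFact_ne_zero, Pbasis'_zero]
  | succ n ih =>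
    have hC : C (δ * qInt (n + 1)) ≠ 0 :=
      C_ne_zero.2 (mul_ne_zero delta_ne_zero (qInt_ne_zero n.succ_pos))
    apply mul_left_cancel₀ hC
    calc C (δ * qInt (n + 1)) * (Pbasis' (n + 1) * Pbasis' k)
        = ∑ i ∈ Finset.range (n + 1),
            C (prodCoeff i (n - i) (k - i)) * ((X - C (Proot n)) * Pbasis' (n + (k - i))) := by
          rw [← mul_assoc, ← X_sub_C_Proot_mul_Pbasis', mul_assoc, ih (by omega), Finset.mul_sum]
          refine Finset.sum_congr rfl fun i hi => ?_
          have := Finset.mem_range.1 hi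
          rw [show n + k - i = n + (k - i) by omega]
          ring
      _ = ∑ i ∈ Finset.range (n + 1),
            C (prodCoeff i (n - i) (k - i) * (δ * qInt (n + k - i + 1))) * Pbasis' (n + k - i + 1)
          + ∑ i ∈ Finset.range (n + 1), C (prodCoeff i (n - i) (k - i)
              * (δ ^ 2 * qInt (k - i) * qInt (2 * n + (k - i) + 1))) * Pbasis' (n + k - i) := by
          rw [← Finset.sum_add_distrib]
          refine Finset.sum_congr rfl fun i hi => ?_
          have := Finset.mem_range.1 hi
          rw [X_sub_C_Proot_mul_Pbasis'_add, show n + (k - i) = n + k - i by omega]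
          simp only [C_mul]
          ring
      _ = ∑ j ∈ Finset.range (n + 2),
            C (δ * qInt (n + 1) * prodCoeff j (n + 1 - j) (k - j)) * Pbasis' (n + 1 + k - j) := by
        refine (Finset.sum_range_succ_succ_of_pascal n ?_ ?_ ?_).symm
        · simp only [Nat.sub_zero]
          rw [prodCoeff_zero_succ, show n + 1 + k = n + k + 1 by omega]
        · intro i hi
          obtain ⟨a, rfl⟩ : ∃ a, n = i + a + 1 := ⟨n - i - 1, by omega⟩
          obtain ⟨b, rfl⟩ : ∃ b, k = i + b + 1 := ⟨k - i - 1, by omega⟩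
          rw [show i + a + 1 + 1 - (i + 1) = a + 1 by omega, show i + b + 1 - (i + 1) = b by omega,
            show i + a + 1 - (i + 1) = a by omega, show i + a + 1 - i = a + 1 by omega,
            show i + b + 1 - i = b + 1 by omega,
            show i + a + 1 + 1 + (i + b + 1) - (i + 1) = i + a + b + 2 by omega,
            show i + a + 1 + (i + b + 1) - (i + 1) + 1 = i + a + b + 2 by omega,
            show i + a + 1 + (i + b + 1) - i = i + a + b + 2 by omega,
            show 2 * (i + a + 1) + (b + 1) + 1 = 2 * i + 2 * a + b + 4 by ring,
            show i + a + 1 + 1 = i + a + 2 by ring, prodCoeff_succ_succ, C_add, add_mul]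
        · obtain ⟨b, rfl⟩ : ∃ b, k = n + b + 1 := ⟨k - n - 1, by omega⟩
          rw [show n + 1 - (n + 1) = 0 by omega, show n + b + 1 - (n + 1) = b by omega,
            show n - n = 0 by omega, show n + b + 1 - n = b + 1 by omega,
            show n + 1 + (n + b + 1) - (n + 1) = n + b + 1 by omega,
            show n + (n + b + 1) - n = n + b + 1 by omega,
            show 2 * n + (b + 1) + 1 = 2 * n + b + 2 by ring, prodCoeff_succ_zero]
      _ = C (δ * qInt (n + 1)) * ∑ j ∈ Finset.range (n + 2),
            C (prodCoeff j (n + 1 - j) (k - j)) * Pbasis' (n + 1 + k - j) := by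
          simp only [Finset.mul_sum, C_mul, mul_assoc]

lemma ZLaurent_smul_eq_C_mul (c : ZLaurent) (f : K[X]) : c • f = C (c : K) * f := by
  rw [Subring.smul_def, Polynomial.smul_eq_C_mul]

lemma inSpanP'_of_mem_span {S : Set ℕ} {f : K[X]}
    (hf : f ∈ Submodule.span ZLaurent (Pbasis' '' S)) : inSpanP' S f := by
  obtain ⟨l, hl, rfl⟩ := (Finsupp.mem_span_image_iff_linearCombination ZLaurent).1 hf
  refine ⟨l.support, l, hl, ?_⟩
  simp [Finsupp.linearCombination_apply, Finsupp.sum, ZLaurent_smul_eq_C_mul]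

lemma Pbasis'_mul_Pbasis'_mem_span {n k m : ℕ} (hmk : m ≤ k) :
    Pbasis' n * Pbasis' k ∈ Submodule.span ZLaurent (Pbasis' '' {j | m ≤ j}) := by
  wlog hnk : n ≤ k generalizing n k
  · rw [mul_comm]
    exact this (hmk.trans (le_of_not_ge hnk)) (le_of_not_ge hnk)
  rw [Pbasis'_mul_Pbasis' hnk]
  refine Submodule.sum_mem _ fun i hi => ?_
  have hi := Finset.mem_range.1 hi
  rw [← ZLaurent_smul_eq_C_mul ⟨_, prodCoeff_mem_ZLaurent i (n - i) (k - i)⟩]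
  exact Submodule.smul_mem _ _ (Submodule.subset_span ⟨_, show m ≤ n + k - i by omega, rfl⟩)

lemma mul_Pbasis'_mem_span {m : ℕ} {y : K[X]} (hy : y ∈ Ralg) {k : ℕ} (hk : m ≤ k) :
    y * Pbasis' k ∈ Submodule.span ZLaurent (Pbasis' '' {j | m ≤ j}) := by
  set R := Submodule.span ZLaurent (Pbasis' '' {j | m ≤ j})
  induction hy using Subring.closure_induction generalizing k with
  | mem y hy =>
    rcases hy with ⟨c, hc, rfl⟩ | ⟨n, -, rfl⟩
    · rw [← ZLaurent_smul_eq_C_mul ⟨c, hc⟩]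
      exact R.smul_mem _ (Submodule.subset_span ⟨k, hk, rfl⟩)
    · exact Pbasis'_mul_Pbasis'_mem_span hk
  | zero => simp
  | one => rw [one_mul]; exact Submodule.subset_span ⟨k, hk, rfl⟩
  | add y z _ _ hy hz => simpa [add_mul] using R.add_mem (hy hk) (hz hk)
  | neg y _ hy => simpa using R.neg_mem (hy hk)
  | mul y z _ _ hy hz =>
    have hR : R ≤ R.comap (LinearMap.mulLeft ZLaurent y) :=
      Submodule.span_le.2 (by rintro _ ⟨j, hj, rfl⟩; exact hy hj)
    simpa [mul_assoc] using hR (hz hk)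

/-- For every `m ≥ 0`, the `ℤ[v,v^{−1}]`-span `𝓡_m` of `{P′_k : k ≥ m}`
is an ideal of `𝓡`: for every `y ∈ 𝓡` and every `k ≥ m`, the product `y · P′_k` is a
`ℤ[v,v^{−1}]`-linear combination of finitely many `P′_j` with `j ≥ m`. -/
theorem span_Pprime_tail_is_ideal (m : ℕ) :
    ∀ y ∈ Ralg, ∀ k : ℕ, m ≤ k → inSpanP' {j : ℕ | m ≤ j} (y * Pbasis' k) :=
  fun _ hy _ hk => inSpanP'_of_mem_span (mul_Pbasis'_mem_span hy hk)
end

section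
/- Let x ∈ Ẑ[q]^. For each root of unity ζ ∈ ℂ, let ev_ζ : Ẑ[q]^ → ℤ[ζ] denote the ring homomorphism induced by evaluation q ↦ ζ (it is well defined since evaluation at ζ annihilates ((q;q)_n) for n at least the order of ζ). If there are infinitely many roots of unity ζ ∈ ℂ of prime power order with ev_ζ(x) = 0, then x = 0. -/
open Polynomial

/-!
Choose polynomial representatives `f n` of `x`; they determine Taylor coefficients `a j` at
`q = 1`. At a primitive `p ^ k`-th root of unity `ζ`, the polynomial `Φ_{p^k}(X + 1)` is
Eisenstein, so `y = ζ - 1` satisfies `y ^ φ(p^k) = p ε` with `ε ≡ -1 mod y`. Hence if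
`∑ a j y ^ j = 0`, the weight `v_p(a j) φ(p^k) + j` cannot have a unique minimum. For the `j`
minimizing `(v_p(a j), j)` lexicographically the minimum is unique as soon as `φ(p^k) > j`, so
unless all `a j` vanish only finitely many prime powers are admissible.

Once all `a j = 0` we have `(q - 1) ^ N ∣ f N`. Writing `d = p ^ a d'` with `p ∤ d'`, the
congruence `Φ_{d'} ^ (p ^ a) ≡ 0 mod (p, Φ_d)` propagates this by induction on `d` to
`Φ_d ^ e ∣ f N` for `d e ≤ N`, because `(Φ_d ^ e)` is `p`-adically closed in `ℤ[q]`.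
Finally `(q; q)_n ∣ ∏_{d ≤ n} Φ_d ^ n`, so every `π_n(x)` vanishes.
-/

lemma qPoch_dvd_qPoch {m n : ℕ} (h : m ≤ n) : qPoch m ∣ qPoch n :=
  Finset.prod_dvd_prod_of_subset _ _ _ (Finset.range_subset_range.mpr h)

lemma cyclotomic_pow_dvd_qPoch_mul (d k : ℕ) (hd : 0 < d) :
    cyclotomic d ℤ ^ k ∣ qPoch (d * k) := by
  induction k with
  | zero => simp
  | succ k ih =>
    obtain ⟨n, hn⟩ : ∃ n, d * (k + 1) = n + 1 :=
      ⟨d * k + d - 1, by rw [Nat.mul_succ]; omega⟩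
    have hdvd : cyclotomic d ℤ ∣ X ^ (n + 1) - 1 :=
      (cyclotomic.dvd_X_pow_sub_one d ℤ).trans <| by
        simpa [← hn, pow_mul] using sub_dvd_pow_sub_pow (X ^ d : ℤ[X]) 1 (k + 1)
    rw [hn, qPoch, Finset.prod_range_succ, pow_succ]
    exact mul_dvd_mul (ih.trans (qPoch_dvd_qPoch (by rw [Nat.mul_succ] at hn; omega))) hdvd

lemma cyclotomic_pow_dvd_qPoch {d k n : ℕ} (hd : 0 < d) (h : d * k ≤ n) :
    cyclotomic d ℤ ^ k ∣ qPoch n :=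
  (cyclotomic_pow_dvd_qPoch_mul d k hd).trans (qPoch_dvd_qPoch h)

lemma X_sub_C_one_pow_dvd_qPoch (n : ℕ) : (X - C 1 : ℤ[X]) ^ n ∣ qPoch n := by
  simpa using cyclotomic_pow_dvd_qPoch (d := 1) one_pos (one_mul n).le

lemma qPoch_dvd_prod_cyclotomic_pow (n : ℕ) :
    qPoch n ∣ ∏ d ∈ Finset.Icc 1 n, cyclotomic d ℤ ^ n := by
  rw [Finset.prod_pow]
  calc qPoch n ∣ ∏ _i ∈ Finset.range n, ∏ d ∈ Finset.Icc 1 n, cyclotomic d ℤ := by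
        refine Finset.prod_dvd_prod_of_dvd _ _ fun i hi => ?_
        rw [← prod_cyclotomic_eq_X_pow_sub_one i.succ_pos]
        refine Finset.prod_dvd_prod_of_subset _ _ _ fun d hd => ?_
        have := Nat.divisor_le hd
        have := Nat.pos_of_mem_divisors hd
        simp only [Finset.mem_Icc, Finset.mem_range] at hi ⊢
        omega
    _ = _ := by rw [Finset.prod_const, Finset.card_range]

lemma prod_cyclotomic_pow_dvd {s : Finset ℕ} {e : ℕ} {g : ℤ[X]}
    (h : ∀ d ∈ s, cyclotomic d ℤ ^ e ∣ g) : ∏ d ∈ s, cyclotomic d ℤ ^ e ∣ g := by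
  rw [← map_dvd_map (Int.castRingHom ℚ) Int.cast_injective
    (monic_prod_of_monic _ _ fun d _ => (cyclotomic.monic d ℤ).pow e), Polynomial.map_prod]
  refine Finset.prod_dvd_of_coprime (fun d _ d' _ hne => ?_) fun d hd => ?_
  · simpa [Function.onFun] using (cyclotomic.isCoprime_rat hne).pow
  · simpa using Polynomial.map_dvd (Int.castRingHom ℚ) (h d hd)

lemma qPoch_dvd_of_forall_cyclotomic_pow_dvd {n : ℕ} {g : ℤ[X]}
    (h : ∀ d ∈ Finset.Icc 1 n, cyclotomic d ℤ ^ n ∣ g) : qPoch n ∣ g :=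
  (qPoch_dvd_prod_cyclotomic_pow n).trans (prod_cyclotomic_pow_dvd h)

lemma X_sub_C_pow_dvd_iff_coeff_taylor {R : Type*} [CommRing R] {r : R} {n : ℕ} {g : R[X]} :
    (X - C r) ^ n ∣ g ↔ ∀ j < n, (taylor r g).coeff j = 0 := by
  rw [X_sub_C_pow_dvd_iff, ← taylor_apply, X_pow_dvd_iff]

lemma coeff_taylor_eq_of_X_sub_C_pow_dvd_sub {R : Type*} [CommRing R] {r : R} {n j : ℕ}
    {g h : R[X]} (hgh : (X - C r) ^ n ∣ g - h) (hj : j < n) :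
    (taylor r g).coeff j = (taylor r h).coeff j := by
  rw [← sub_eq_zero, ← coeff_sub, ← map_sub]
  exact X_sub_C_pow_dvd_iff_coeff_taylor.mp hgh j hj

lemma C_dvd_of_map_zmod_eq_zero {p : ℕ} {g : ℤ[X]} (h : g.map (Int.castRingHom (ZMod p)) = 0) :
    C (p : ℤ) ∣ g :=
  (C_dvd_iff_dvd_coeff _ _).mpr fun i => (ZMod.intCast_zmod_eq_zero_iff_dvd _ p).mp <| by
    simpa using congrArg (coeff · i) h

lemma cyclotomic_pow_prime_pow_mem_span_pair {p n a : ℕ} [Fact p.Prime] (hn : ¬p ∣ n)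
    (ha : 0 < a) :
    cyclotomic n ℤ ^ p ^ a ∈ Ideal.span {C (p : ℤ), cyclotomic (p ^ a * n) ℤ} := by
  obtain ⟨k, hk⟩ : (cyclotomic (p ^ a * n) ℤ).map (Int.castRingHom (ZMod p)) ∣
      (cyclotomic n ℤ ^ p ^ a).map (Int.castRingHom (ZMod p)) := by
    rw [Polynomial.map_pow, map_cyclotomic_int, map_cyclotomic_int,
      cyclotomic_mul_prime_pow_eq _ hn ha]
    exact pow_dvd_pow _ (Nat.sub_le _ _)
  obtain ⟨k, rfl⟩ := map_surjective _ (ZMod.ringHom_surjective (Int.castRingHom (ZMod p))) k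
  obtain ⟨u, hu⟩ := C_dvd_of_map_zmod_eq_zero (p := p)
    (g := cyclotomic n ℤ ^ p ^ a - cyclotomic (p ^ a * n) ℤ * k) <| by
      rw [Polynomial.map_sub, Polynomial.map_mul, hk, sub_self]
  exact Ideal.mem_span_pair.mpr ⟨u, k, by rw [mul_comm u, ← hu]; ring⟩

lemma pow_add_mem_span_pair_pow {R : Type*} [CommSemiring R] {a b x : R}
    (hx : x ∈ Ideal.span {a, b}) (t e : ℕ) : x ^ (t + e) ∈ Ideal.span {a ^ t, b ^ e} := by
  obtain ⟨u, v, rfl⟩ := Ideal.mem_span_pair.mp hx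
  refine Ideal.add_pow_mem_of_pow_mem_of_le _ (m := t) (n := e) ?_ ?_ (by omega) <;>
    rw [mul_pow] <;> exact Ideal.mul_mem_left _ _ (Ideal.subset_span (by simp))

lemma Polynomial.Monic.dvd_of_forall_mem_span_C_pow {p : ℕ} (hp : 1 < p) {g h : ℤ[X]}
    (hg : g.Monic) (hh : ∀ t, h ∈ Ideal.span {C (p : ℤ) ^ t, g}) : g ∣ h := by
  rw [← modByMonic_eq_zero_iff_dvd hg]
  ext i
  rw [coeff_zero]
  set c := (h %ₘ g).coeff i
  obtain ⟨u, v, huv⟩ := Ideal.mem_span_pair.mp (hh c.natAbs)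
  have hmod : h %ₘ g = (p : ℤ) ^ c.natAbs • (u %ₘ g) := by
    rw [← huv, add_modByMonic, (modByMonic_eq_zero_iff_dvd hg).mpr (dvd_mul_left g v), add_zero,
      ← smul_modByMonic, smul_eq_C_mul, map_pow, mul_comm]
  refine Int.eq_zero_of_dvd_of_natAbs_lt_natAbs
    ⟨_, (congrArg (coeff · i) hmod).trans (coeff_smul _ _ _)⟩ ?_
  simpa using Nat.lt_pow_self hp

lemma exists_ne_weight_le_of_aeval_eq_zero {S : Type*} [CommRing S] [IsDomain S] {p : ℕ}
    [Fact p.Prime] (ψ : S →+* ZMod p) {y ε : S} {e : ℕ} (hy : y ≠ 0) (hψy : ψ y = 0)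
    (hψε : ψ ε ≠ 0) (hyε : y ^ e = p * ε) {F : ℤ[X]} (hF : aeval y F = 0) {J : ℕ}
    (hJ : F.coeff J ≠ 0) :
    ∃ j ≠ J, F.coeff j ≠ 0 ∧
      padicValInt p (F.coeff j) * e + j ≤ padicValInt p (F.coeff J) * e + J := by
  by_contra! hmin
  set v : ℕ → ℕ := fun j => padicValInt p (F.coeff j)
  set V := F.support.sup v
  -- multiplying by `ε ^ V` trades each factor `p` for `y ^ e`
  have hscale {j k : ℕ} {u : ℤ} (hk : k ≤ V) :
      ε ^ V * (((p : ℤ) ^ k * u : ℤ) * y ^ j) = y ^ (k * e + j) * (ε ^ (V - k) * u) := by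
    have key : (p : S) ^ k * ε ^ k = y ^ (k * e) := by
      rw [← mul_pow, ← hyε, ← pow_mul, mul_comm]
    rw [← pow_sub_mul_pow ε hk]
    push_cast
    linear_combination (ε ^ (V - k) * u * y ^ j) * key
  have hterms : ∀ j ∈ F.support.erase J,
      y ^ (v J * e + J + 1) ∣ ε ^ V * (F.coeff j * y ^ j) := by
    intro j hj
    obtain ⟨hjJ, hj⟩ := Finset.mem_erase.mp hj
    obtain ⟨u, hu⟩ := padicValInt_dvd (p := p) (F.coeff j)
    rw [hu, hscale (Finset.le_sup hj)]
    exact (pow_dvd_pow y (hmin j hjJ (mem_support_iff.mp hj))).mul_right _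
  have hsum : ∑ j ∈ F.support, ε ^ V * (F.coeff j * y ^ j) = 0 := by
    have hF' : ∑ j ∈ F.support, (F.coeff j : S) * y ^ j = 0 := by
      simpa [aeval_def, eval₂_eq_sum, Polynomial.sum_def] using hF
    rw [← Finset.mul_sum, hF', mul_zero]
  obtain ⟨u, hu⟩ := padicValInt_dvd (p := p) (F.coeff J)
  have hpu : ¬(p : ℤ) ∣ u := fun ⟨w, hw⟩ =>
    (((padicValInt_dvd_iff (v J + 1) (F.coeff J)).mp
      ⟨w, by rw [hu, hw]; ring⟩).resolve_left hJ).not_gt (Nat.lt_succ_self _)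
  have hdvd : y ^ (v J * e + J + 1) ∣ y ^ (v J * e + J) * (ε ^ (V - v J) * u) := by
    rw [← hscale (Finset.le_sup (mem_support_iff.mpr hJ)), ← hu,
      eq_neg_of_add_eq_zero_left ((Finset.add_sum_erase _ _ (mem_support_iff.mpr hJ)).trans hsum),
      dvd_neg]
    exact Finset.dvd_sum hterms
  rw [pow_succ, mul_dvd_mul_iff_left (pow_ne_zero _ hy)] at hdvd
  obtain ⟨z, hz⟩ := hdvd
  have hψ := congrArg ψ hz
  rw [map_mul, map_mul, hψy, zero_mul, map_pow, map_intCast] at hψ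
  exact hpu ((ZMod.intCast_zmod_eq_zero_iff_dvd u p).mp
    ((mul_eq_zero.mp hψ).resolve_left (pow_ne_zero _ hψε)))

lemma exists_cyclotomic_prime_pow_comp_X_add_one_eq (p k : ℕ) [hp : Fact p.Prime] :
    ∃ H : ℤ[X], (cyclotomic (p ^ (k + 1)) ℤ).comp (X + 1) =
      X ^ (p ^ (k + 1)).totient + C (p : ℤ) * H ∧ H.coeff 0 = 1 := by
  have hbar : cyclotomic (p ^ (k + 1)) (ZMod p) = (X - 1) ^ (p ^ (k + 1)).totient := by
    conv_lhs => rw [← mul_one (p ^ (k + 1))]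
    rw [cyclotomic_mul_prime_pow_eq _ hp.out.not_dvd_one k.succ_pos, cyclotomic_one,
      Nat.totient_prime_pow_succ hp.out, Nat.succ_sub_one, pow_succ, Nat.mul_sub_one]
  obtain ⟨H, hH⟩ := C_dvd_of_map_zmod_eq_zero (p := p)
    (g := (cyclotomic (p ^ (k + 1)) ℤ).comp (X + 1) - X ^ (p ^ (k + 1)).totient) <| by
      simp [map_comp, hbar, sub_comp, pow_comp]
  refine ⟨H, eq_add_of_sub_eq' hH, ?_⟩
  have h0 := congrArg (eval 0) hH
  rw [coeff_zero_eq_eval_zero]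
  simp only [eval_sub, eval_comp, eval_add, eval_X, eval_one, zero_add,
    eval_one_cyclotomic_prime_pow, eval_pow, eval_mul, eval_C, sub_zero,
    zero_pow (Nat.totient_pos.mpr (pow_pos hp.out.pos _)).ne'] at h0
  exact (mul_eq_left₀ (by exact_mod_cast hp.out.ne_zero)).mp h0.symm

lemma aeval_root_sub_one_comp_X_add_one {f : ℤ[X]} (P : ℤ[X]) :
    aeval (AdjoinRoot.root f - 1) (P.comp (X + 1)) = AdjoinRoot.mk f P := by
  rw [aeval_comp, ← AdjoinRoot.aeval_eq]
  simp

lemma exists_ne_weight_le_of_cyclotomic_dvd {p k : ℕ} [hp : Fact p.Prime] {g : ℤ[X]}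
    (hg : cyclotomic (p ^ (k + 1)) ℤ ∣ g) {J : ℕ} (hJ : (taylor 1 g).coeff J ≠ 0) :
    ∃ j ≠ J, (taylor 1 g).coeff j ≠ 0 ∧
      padicValInt p ((taylor 1 g).coeff j) * (p ^ (k + 1)).totient + j ≤
        padicValInt p ((taylor 1 g).coeff J) * (p ^ (k + 1)).totient + J := by
  set Φ := cyclotomic (p ^ (k + 1)) ℤ
  have hφ : 0 < (p ^ (k + 1)).totient := Nat.totient_pos.mpr (pow_pos hp.out.pos _)
  have : IsDomain (AdjoinRoot Φ) :=
    AdjoinRoot.isDomain_of_prime (cyclotomic.irreducible (pow_pos hp.out.pos _)).prime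
  obtain ⟨H, hH, hH0⟩ := exists_cyclotomic_prime_pow_comp_X_add_one_eq p k
  set y := AdjoinRoot.root Φ - 1
  have hΦ1 : eval₂ (Int.castRingHom (ZMod p)) 1 Φ = 0 := by
    simp [Φ, eval₂_at_one, eval_one_cyclotomic_prime_pow]
  set ψ := AdjoinRoot.lift (Int.castRingHom (ZMod p)) 1 hΦ1
  have hψy : ψ y = 0 := by simp [y, ψ]
  have hyε : y ^ (p ^ (k + 1)).totient = p * -aeval y H := by
    have h := aeval_root_sub_one_comp_X_add_one (f := Φ) Φ
    rw [hH, AdjoinRoot.mk_self, map_add, map_mul, map_pow, aeval_X, aeval_C, map_natCast] at h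
    linear_combination h
  refine exists_ne_weight_le_of_aeval_eq_zero ψ (fun hy => ?_) hψy ?_ hyε ?_ hJ
  · -- `y = 0` would make `p` vanish in `ℤ[ζ]`, i.e. `Φ ∣ p`
    rw [hy, zero_pow hφ.ne', ← coeff_zero_eq_aeval_zero', hH0, map_one, mul_neg_one, zero_eq_neg,
      ← map_natCast (AdjoinRoot.mk Φ), ← C_eq_natCast, AdjoinRoot.mk_eq_zero] at hyε
    have := natDegree_le_of_dvd hyε (C_ne_zero.mpr (by exact_mod_cast hp.out.ne_zero))
    rw [natDegree_cyclotomic, natDegree_C] at this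
    omega
  · have hψH : aeval (ψ y) H = ψ (aeval y H) := aeval_algHom_apply ψ.toIntAlgHom y H
    rw [map_neg, ← hψH, hψy, ← coeff_zero_eq_aeval_zero', hH0, map_one]
    exact neg_ne_zero.mpr one_ne_zero
  · rw [taylor_apply, C_1]
    exact (aeval_root_sub_one_comp_X_add_one g).trans (AdjoinRoot.mk_eq_zero.mpr hg)

lemma Nat.exists_mem_forall_lexMin {s : Set ℕ} (hs : s.Nonempty) (v : ℕ → ℕ) :
    ∃ J ∈ s, ∀ j ∈ s, v J ≤ v j ∧ (j < J → v J < v j) := by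
  obtain ⟨J₀, hJ₀, hmin₀⟩ := (measure v).wf.has_min s hs
  obtain ⟨J, ⟨hJ, hvJ⟩, hmin⟩ :=
    wellFounded_lt.has_min {j ∈ s | v j = v J₀} ⟨J₀, hJ₀, rfl⟩
  refine ⟨J, hJ, fun j hj => ⟨hvJ ▸ not_lt.mp (hmin₀ j hj), fun hjJ => ?_⟩⟩
  by_contra! h
  exact hmin j ⟨hj, le_antisymm (hvJ ▸ h) (not_lt.mp (hmin₀ j hj))⟩ hjJ

lemma Nat.Prime.pow_succ_le_two_mul_totient {p : ℕ} (hp : p.Prime) (k : ℕ) :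
    p ^ (k + 1) ≤ 2 * (p ^ (k + 1)).totient := by
  rw [Nat.totient_prime_pow_succ hp, pow_succ]
  calc p ^ k * p ≤ p ^ k * (2 * (p - 1)) := Nat.mul_le_mul_left _ (by have := hp.two_le; omega)
    _ = 2 * (p ^ k * (p - 1)) := by ring

lemma finite_setOf_orderOf_mem {R : Type*} [CommRing R] [IsDomain R] {M : Set ℕ}
    (hM : M.Finite) (h0 : 0 ∉ M) : {ζ : R | orderOf ζ ∈ M}.Finite :=
  (hM.biUnion fun m _ => (primitiveRoots m R).finite_toSet).subset fun ζ hζ =>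
    Set.mem_biUnion hζ <| (mem_primitiveRoots (Nat.pos_of_ne_zero fun h => h0 (h ▸ hζ))).mpr
      (IsPrimitiveRoot.orderOf ζ)

lemma cyclotomic_dvd_of_aeval_eq_zero {K : Type*} [Field K] [CharZero K] {ζ : K} {n : ℕ}
    (hζ : IsPrimitiveRoot ζ n) (hn : 0 < n) {g : ℤ[X]} (hg : aeval ζ g = 0) :
    cyclotomic n ℤ ∣ g :=
  cyclotomic_eq_minpoly hζ hn ▸ minpoly.isIntegrallyClosed_dvd (hζ.isIntegral hn) hg

lemma habiroPi_eq_factor {n N : ℕ} (h : n ≤ N) (x : HabiroRing) :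
    habiroPi n x = Ideal.Quotient.factor
      (Ideal.span_singleton_le_span_singleton.mpr (qPoch_dvd_qPoch h)) (habiroPi N x) := by
  induction N, h using Nat.le_induction with
  | base => obtain ⟨y, hy⟩ := Ideal.Quotient.mk_surjective (habiroPi n x); rw [← hy]; rfl
  | succ N hnN ih =>
    obtain ⟨y, hy⟩ := Ideal.Quotient.mk_surjective (habiroPi (N + 1) x)
    have hN : habiroPi N x = habiroTrans N (habiroPi (N + 1) x) := (x.2 N).symm
    rw [ih, hN, ← hy, habiroTrans, Ideal.Quotient.factor_mk, Ideal.Quotient.factor_mk,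
      Ideal.Quotient.factor_mk]

def QPochCompatible (f : ℕ → ℤ[X]) : Prop :=
  ∀ ⦃n N : ℕ⦄, n ≤ N → qPoch n ∣ f N - f n

lemma exists_qPochCompatible (x : HabiroRing) :
    ∃ f, QPochCompatible f ∧ ∀ n, habiroPi n x = Ideal.Quotient.mk _ (f n) := by
  choose f hf using fun n => Ideal.Quotient.mk_surjective (habiroPi n x)
  refine ⟨f, fun n N h => ?_, fun n => (hf n).symm⟩
  rw [← Ideal.mem_span_singleton, ← Ideal.Quotient.eq, hf n, habiroPi_eq_factor h, ← hf N,
    Ideal.Quotient.factor_mk]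

variable {f : ℕ → ℤ[X]}

noncomputable def taylorCoeff (f : ℕ → ℤ[X]) (j : ℕ) : ℤ :=
  (taylor 1 (f (j + 1))).coeff j

lemma QPochCompatible.coeff_taylor (hf : QPochCompatible f) {j N : ℕ} (hj : j < N) :
    (taylor 1 (f N)).coeff j = taylorCoeff f j :=
  coeff_taylor_eq_of_X_sub_C_pow_dvd_sub ((X_sub_C_one_pow_dvd_qPoch _).trans (hf hj))
    j.lt_succ_self

theorem QPochCompatible.cyclotomic_pow_dvd (hf : QPochCompatible f)
    (h1 : ∀ N, (X - C 1) ^ N ∣ f N) {d : ℕ} (hd : 0 < d) {e N : ℕ} (h : d * e ≤ N) :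
    cyclotomic d ℤ ^ e ∣ f N := by
  induction d using Nat.strong_induction_on generalizing e N with
  | _ d ih =>
  obtain rfl | hd1 := (Nat.one_le_iff_ne_zero.mpr hd.ne').eq_or_lt
  · rw [cyclotomic_one, ← C_1]
    exact (pow_dvd_pow _ (by omega)).trans (h1 N)
  obtain ⟨p, hp, hpd⟩ : ∃ p, p.Prime ∧ p ∣ d :=
    ⟨d.minFac, Nat.minFac_prime hd1.ne', d.minFac_dvd⟩
  have : Fact p.Prime := ⟨hp⟩
  obtain ⟨a, d', hpd', rfl⟩ := Nat.exists_eq_pow_mul_and_not_dvd hd.ne' p hp.ne_one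
  have ha : 0 < a := Nat.pos_of_ne_zero fun ha => hpd' (by simpa [ha] using hpd)
  have hd' : 0 < d' := Nat.pos_of_mul_pos_left hd
  refine ((cyclotomic.monic _ ℤ).pow e).dvd_of_forall_mem_span_C_pow hp.one_lt fun t => ?_
  set I := Ideal.span {C (p : ℤ) ^ t, cyclotomic (p ^ a * d') ℤ ^ e}
  set M := max N (d' * (p ^ a * (t + e)))
  have hfM : f M ∈ I := by
    obtain ⟨g, hg⟩ := ih d' (lt_mul_left hd' (Nat.one_lt_pow ha.ne' hp.one_lt)) hd'
      (le_max_right N _)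
    rw [hg, pow_mul]
    exact I.mul_mem_right _
      (pow_add_mem_span_pair_pow (cyclotomic_pow_prime_pow_mem_span_pair hpd' ha) t e)
  have hsub : f M - f N ∈ I := by
    obtain ⟨g, hg⟩ := (cyclotomic_pow_dvd_qPoch hd h).trans (hf (le_max_left N _))
    rw [hg]
    exact I.mul_mem_right _ (Ideal.subset_span (by simp))
  simpa using I.sub_mem hfM hsub

lemma QPochCompatible.qPoch_dvd (hf : QPochCompatible f) (h0 : taylorCoeff f = 0) (n : ℕ) :
    qPoch n ∣ f n := by
  have h1 (N : ℕ) : (X - C 1) ^ N ∣ f N :=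
    X_sub_C_pow_dvd_iff_coeff_taylor.mpr fun j hj => (hf.coeff_taylor hj).trans (congrFun h0 j)
  have : qPoch n ∣ f (n * n) := qPoch_dvd_of_forall_cyclotomic_pow_dvd fun d hd =>
    have hd := Finset.mem_Icc.mp hd
    hf.cyclotomic_pow_dvd h1 hd.1 (Nat.mul_le_mul_right n hd.2)
  simpa using dvd_sub this (hf (Nat.le_mul_self n))

lemma QPochCompatible.totient_le_of_cyclotomic_dvd (hf : QPochCompatible f) {p k J : ℕ}
    [hp : Fact p.Prime] (hJ : taylorCoeff f J ≠ 0)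
    (hmin : ∀ j, taylorCoeff f j ≠ 0 →
      padicValInt p (taylorCoeff f J) ≤ padicValInt p (taylorCoeff f j) ∧
        (j < J → padicValInt p (taylorCoeff f J) < padicValInt p (taylorCoeff f j)))
    (hdvd : cyclotomic (p ^ (k + 1)) ℤ ∣ f (p ^ (k + 1))) : (p ^ (k + 1)).totient ≤ J := by
  by_contra! hJφ
  set N := max (p ^ (k + 1)) (padicValInt p (taylorCoeff f J) * (p ^ (k + 1)).totient + J + 1)
  have hdvdN : cyclotomic (p ^ (k + 1)) ℤ ∣ f N := by
    have hq : cyclotomic (p ^ (k + 1)) ℤ ∣ qPoch (p ^ (k + 1)) := by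
      simpa using cyclotomic_pow_dvd_qPoch (k := 1) (pow_pos hp.out.pos (k + 1)) le_rfl
    simpa using dvd_add hdvd (hq.trans (hf (le_max_left _ _)))
  obtain ⟨j, hjJ, hj, hw⟩ := exists_ne_weight_le_of_cyclotomic_dvd hdvdN
    (J := J) (by rwa [hf.coeff_taylor (by omega)])
  rw [hf.coeff_taylor (show J < N by omega)] at hw
  rcases lt_or_ge j N with hjN | hjN
  · rw [hf.coeff_taylor hjN] at hw hj
    obtain ⟨hle, hlt⟩ := hmin j hj
    rcases lt_or_gt_of_ne hjJ with hjJ | hjJ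
    · have := Nat.mul_le_mul_right (p ^ (k + 1)).totient (hlt hjJ)
      rw [Nat.succ_mul] at this
      omega
    · have := Nat.mul_le_mul_right (p ^ (k + 1)).totient hle
      omega
  · omega

theorem QPochCompatible.taylorCoeff_eq_zero (hf : QPochCompatible f)
    (hM : {m | IsPrimePow m ∧ cyclotomic m ℤ ∣ f m}.Infinite) : taylorCoeff f = 0 := by
  by_contra hne
  obtain ⟨J, hJ⟩ : ∃ J, taylorCoeff f J ≠ 0 := Function.ne_iff.mp hne
  choose Jp hJp hJpmin using fun p : ℕ =>
    Nat.exists_mem_forall_lexMin (s := {j | taylorCoeff f j ≠ 0}) ⟨J, hJ⟩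
      fun j => padicValInt p (taylorCoeff f j)
  set L := max J ((Finset.range ((taylorCoeff f J).natAbs + 1)).sup Jp)
  have hJpL {p : ℕ} (hp : p.Prime) : Jp p ≤ L := by
    by_cases hpJ : (p : ℤ) ∣ taylorCoeff f J
    · have := Nat.le_of_dvd (Int.natAbs_pos.mpr hJ) (Int.natCast_dvd.mp hpJ)
      exact le_max_of_le_right (Finset.le_sup (Finset.mem_range.mpr (by omega)))
    · have : Fact p.Prime := ⟨hp⟩
      have h0 := padicValInt.eq_zero_of_not_dvd hpJ
      refine le_max_of_le_left (not_lt.mp fun hJ' => ?_)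
      have := (hJpmin p J hJ).2 hJ'
      omega
  -- an admissible prime power `m = p ^ (k + 1)` has `φ(m) ≤ Jp p ≤ L`, hence `m ≤ 2 L`
  refine hM ((Set.finite_Iic (2 * L)).subset fun m ⟨hm, hdvd⟩ => ?_)
  obtain ⟨p, k, hp, hk, rfl⟩ := (isPrimePow_nat_iff m).mp hm
  obtain ⟨k, rfl⟩ : ∃ k', k = k' + 1 := Nat.exists_eq_succ_of_ne_zero hk.ne'
  have : Fact p.Prime := ⟨hp⟩
  have := hf.totient_le_of_cyclotomic_dvd (hJp p) (hJpmin p) hdvd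
  have := hp.pow_succ_le_two_mul_totient k
  have := hJpL hp
  rw [Set.mem_Iic]
  omega

/-- If `x ∈ Ẑ[q]^` and there are infinitely many roots of unity
`ζ ∈ ℂ` of prime power order such that `ev_ζ(x) = 0` (where `ev_ζ` is induced by
evaluation `q ↦ ζ`, computed on any polynomial representative of `π_{ord ζ}(x)`),
then `x = 0`. -/
theorem habiro_detected_by_prime_power_roots_of_unity (x : HabiroRing)
    (h : {ζ : ℂ | (∃ p k : ℕ, p.Prime ∧ orderOf ζ = p ^ k) ∧
      ∀ f : Polynomial ℤ,
        habiroPi (orderOf ζ) x = Ideal.Quotient.mk (Ideal.span {qPoch (orderOf ζ)}) f →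
        Polynomial.eval₂ (Int.castRingHom ℂ) ζ f = 0}.Infinite) :
    x = 0 := by
  obtain ⟨f, hf, hx⟩ := exists_qPochCompatible x
  have hM : {m | IsPrimePow m ∧ cyclotomic m ℤ ∣ f m}.Infinite := by
    refine fun hfin => (h.sdiff (Set.finite_singleton 1))
      ((finite_setOf_orderOf_mem hfin fun h0 => not_isPrimePow_zero h0.1).subset ?_)
    rintro ζ ⟨⟨⟨p, k, hp, hζ⟩, hev⟩, hne : ζ ≠ 1⟩
    have hk : k ≠ 0 := by rintro rfl; exact hne (orderOf_eq_one_iff.mp (by simpa using hζ))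
    refine ⟨(isPrimePow_nat_iff _).mpr ⟨p, k, hp, Nat.pos_of_ne_zero hk, hζ.symm⟩, ?_⟩
    exact cyclotomic_dvd_of_aeval_eq_zero (IsPrimitiveRoot.orderOf ζ) (hζ ▸ pow_pos hp.pos k)
      (by rw [aeval_def, algebraMap_int_eq]; exact hev _ (hx _))
  refine Subtype.ext (funext fun n => ?_)
  change habiroPi n x = 0
  rw [hx, Ideal.Quotient.eq_zero_iff_mem, Ideal.mem_span_singleton]
  exact hf.qPoch_dvd (hf.taylorCoeff_eq_zero hM) n
end

section
/- Let p be a prime, k ≥ 1, and let ζ ∈ ℂ be a primitive p^k-th root of unity. Let x ∈ Ẑ[q]^, and write ι₁(x) = Σ_{n≥0} a_n t^n ∈ ℤ[[t]] (a_n ∈ ℤ), where ι₁ : Ẑ[q]^ → ℤ[[t]] is the homomorphism induced by q ↦ 1 + t. Then the series Σ_{n≥0} a_n (ζ − 1)^n converges p-adically in ℤ[ζ] to ev_ζ(x): for every s ≥ 1 there exists N such that for all M ≥ N, ev_ζ(x) − Σ_{n=0}^{M−1} a_n (ζ − 1)^n lies in the ideal p^s ℤ[ζ]. -/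
/-!
Since `ζ ^ p ^ k = 1`, the binomial theorem gives `(ζ - 1) ^ p ^ k ∈ p ℤ[ζ]`, hence
`(ζ - 1) ^ M ∈ p ^ s ℤ[ζ]` once `M ≥ s p ^ k`. For such `M` take a representative `g` of
`π_M(x)`. Because `(q;q)_{p^k}` vanishes at `ζ`, `ev_ζ(x) = g(ζ)`; and `g(1 + t)` agrees
with `Σ aₙ tⁿ` below degree `M`, so `g(ζ) - Σ_{n<M} aₙ (ζ - 1)ⁿ` is divisible by
`(ζ - 1) ^ M`.
-/

open Polynomial

lemma habiroTrans_habiroPi_succ (x : HabiroRing) (n : ℕ) :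
    habiroTrans n (habiroPi (n + 1) x) = habiroPi n x :=
  x.2 n

lemma habiroPi_eq_mk_of_le_s11 {x : HabiroRing} {m n : ℕ} (hmn : m ≤ n) {g : ℤ[X]}
    (hg : habiroPi n x = Ideal.Quotient.mk (Ideal.span {qPoch n}) g) :
    habiroPi m x = Ideal.Quotient.mk (Ideal.span {qPoch m}) g := by
  induction n, hmn using Nat.le_induction with
  | base => exact hg
  | succ n _ ih =>
    refine ih ?_
    rw [← habiroTrans_habiroPi_succ, hg]
    exact Ideal.Quotient.factor_mk _ _

lemma PowerSeries.coeff_eq_of_mk_sub_mem_span_X_pow {S : Type*} [CommRing S] {a : ℕ → S}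
    {h : S[X]} {M : ℕ}
    (hM : PowerSeries.mk a - (h : PowerSeries S) ∈ Ideal.span {PowerSeries.X ^ M}) :
    ∀ i < M, a i = h.coeff i := by
  intro i hi
  have := PowerSeries.X_pow_dvd_iff.mp (Ideal.mem_span_singleton.mp hM) i hi
  simpa [sub_eq_zero] using this

lemma eval₂_one_add_X_eq_coe_comp (g : ℤ[X]) :
    g.eval₂ (Int.castRingHom (PowerSeries ℤ)) (1 + PowerSeries.X) =
      ((g.comp (X + 1) : ℤ[X]) : PowerSeries ℤ) := by
  rw [comp, ← coeToPowerSeries.ringHom_apply, hom_eval₂,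
    RingHom.ext_int (coeToPowerSeries.ringHom.comp C) (Int.castRingHom _)]
  simp [add_comm]

section CommRing

variable {R : Type*} [CommRing R]

lemma eval₂_qPoch_eq_zero_of_pow_eq_one {z : R} {n : ℕ} (hn : 0 < n) (hz : z ^ n = 1) :
    (qPoch n).eval₂ (Int.castRingHom R) z = 0 := by
  rw [qPoch, eval₂_finsetProd]
  refine Finset.prod_eq_zero (i := n - 1) (Finset.mem_range.mpr (by omega)) ?_
  simp [Nat.sub_add_cancel hn, hz]

lemma eval₂_eq_of_habiroPi_eq {z : R} {n m : ℕ} (hn : 0 < n) (hnm : n ≤ m) (hz : z ^ n = 1)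
    {x : HabiroRing} {f g : ℤ[X]}
    (hf : habiroPi n x = Ideal.Quotient.mk (Ideal.span {qPoch n}) f)
    (hg : habiroPi m x = Ideal.Quotient.mk (Ideal.span {qPoch m}) g) :
    f.eval₂ (Int.castRingHom R) z = g.eval₂ (Int.castRingHom R) z := by
  rw [habiroPi_eq_mk_of_le_s11 hnm hg, Ideal.Quotient.eq, Ideal.mem_span_singleton] at hf
  obtain ⟨u, hu⟩ := hf
  rw [eq_comm, ← sub_eq_zero, ← eval₂_sub, hu, eval₂_mul,
    eval₂_qPoch_eq_zero_of_pow_eq_one hn hz, zero_mul]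

lemma exists_sub_one_pow_prime_pow_eq {p : ℕ} (hp : p.Prime) (a : R) (k : ℕ) :
    ∃ r, (a - 1) ^ p ^ k = a ^ p ^ k - 1 + p * r := by
  obtain ⟨r, hr⟩ := exists_add_pow_prime_pow_eq hp (a - 1) 1 k
  rw [sub_add_cancel, one_pow] at hr
  exact ⟨-((a - 1) * r), by linear_combination -hr⟩

lemma natCast_pow_dvd_sub_one_pow_mul {p : ℕ} (hp : p.Prime) {z : R} {k : ℕ}
    (hz : z ^ p ^ k = 1) (s : ℕ) : (p : R) ^ s ∣ (z - 1) ^ (s * p ^ k) := by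
  obtain ⟨r, hr⟩ := exists_sub_one_pow_prime_pow_eq hp z k
  rw [hz, sub_self, zero_add] at hr
  rw [mul_comm, pow_mul, hr, mul_pow]
  exact dvd_mul_right _ _

lemma pow_dvd_eval₂_sub_sum_of_coeff_eq {S : Type*} [CommRing S] (φ : S →+* R) {h : S[X]}
    {a : ℕ → S} {M : ℕ} (ha : ∀ i < M, a i = h.coeff i) (t : R) :
    t ^ M ∣ h.eval₂ φ t - ∑ i ∈ Finset.range M, φ (a i) * t ^ i := by
  have hX : (X : S[X]) ^ M ∣ h - ∑ i ∈ Finset.range M, C (a i) * X ^ i := by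
    refine X_pow_dvd_iff.mpr fun d hd => ?_
    simp [finsetSum_coeff, ha d hd, hd]
  obtain ⟨u, hu⟩ := hX
  refine ⟨u.eval₂ φ t, ?_⟩
  simpa [eval₂_finsetSum] using congrArg (eval₂ φ t) hu

lemma sub_one_pow_dvd_eval₂_sub_sum {a : ℕ → ℤ} {g : ℤ[X]} {M : ℕ}
    (ha : PowerSeries.mk a - g.eval₂ (Int.castRingHom (PowerSeries ℤ)) (1 + PowerSeries.X) ∈
      Ideal.span {PowerSeries.X ^ M}) (z : R) :
    (z - 1) ^ M ∣
      g.eval₂ (Int.castRingHom R) z - ∑ i ∈ Finset.range M, (a i : R) * (z - 1) ^ i := by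
  rw [eval₂_one_add_X_eq_coe_comp] at ha
  have := pow_dvd_eval₂_sub_sum_of_coeff_eq (Int.castRingHom R)
    (PowerSeries.coeff_eq_of_mk_sub_mem_span_X_pow ha) (z - 1)
  simpa [eval₂_comp] using this

lemma natCast_pow_dvd_eval₂_sub_sum {p : ℕ} (hp : p.Prime) {k : ℕ}
    {z : R} (hz : z ^ p ^ k = 1) {x : HabiroRing} {a : ℕ → ℤ}
    (ha : ∀ (n : ℕ) (f : ℤ[X]), habiroPi n x = Ideal.Quotient.mk (Ideal.span {qPoch n}) f →
      PowerSeries.mk a - f.eval₂ (Int.castRingHom (PowerSeries ℤ)) (1 + PowerSeries.X) ∈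
        Ideal.span {PowerSeries.X ^ n})
    {f : ℤ[X]} (hf : habiroPi (p ^ k) x = Ideal.Quotient.mk (Ideal.span {qPoch (p ^ k)}) f)
    {s : ℕ} (hs : 1 ≤ s) {M : ℕ} (hM : s * p ^ k ≤ M) :
    (p : R) ^ s ∣
      f.eval₂ (Int.castRingHom R) z - ∑ n ∈ Finset.range M, (a n : R) * (z - 1) ^ n := by
  obtain ⟨g, hg⟩ := Ideal.Quotient.mk_surjective (habiroPi M x)
  have hpk : 0 < p ^ k := pow_pos hp.pos k
  rw [eval₂_eq_of_habiroPi_eq hpk ((Nat.le_mul_of_pos_left _ hs).trans hM) hz hf hg.symm]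
  exact (natCast_pow_dvd_sub_one_pow_mul hp hz s).trans
    ((pow_dvd_pow _ hM).trans (sub_one_pow_dvd_eval₂_sub_sum (ha M g hg.symm) z))

end CommRing

lemma Subring.coe_eval₂_intCast {A : Type*} [Ring A] {S : Subring A} (z : S) (f : ℤ[X]) :
    ((f.eval₂ (Int.castRingHom S) z : S) : A) = f.eval₂ (Int.castRingHom A) z := by
  rw [← Subring.coe_subtype, hom_eval₂, RingHom.ext_int (RingHom.comp _ _) (Int.castRingHom A)]

theorem habiro_padic_convergence_at_prime_power_root_general
    (p : ℕ) (hp : p.Prime) (k : ℕ) (ζ : ℂ) (hζ : IsPrimitiveRoot ζ (p ^ k))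
    (x : HabiroRing) (a : ℕ → ℤ)
    (ha : ∀ (n : ℕ) (f : Polynomial ℤ),
      habiroPi n x = Ideal.Quotient.mk (Ideal.span {qPoch n}) f →
      (PowerSeries.mk fun i => a i) -
        Polynomial.eval₂ (Int.castRingHom (PowerSeries ℤ)) (1 + PowerSeries.X) f ∈
          Ideal.span {(PowerSeries.X : PowerSeries ℤ) ^ n})
    (f : Polynomial ℤ)
    (hf : habiroPi (p ^ k) x = Ideal.Quotient.mk (Ideal.span {qPoch (p ^ k)}) f)
    (s : ℕ) (hs : 1 ≤ s) :
    ∃ N : ℕ, ∀ M : ℕ, N ≤ M →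
      ∃ y ∈ Subring.closure {ζ},
        Polynomial.eval₂ (Int.castRingHom ℂ) ζ f -
          ∑ n ∈ Finset.range M, (a n : ℂ) * (ζ - 1) ^ n = (p : ℂ) ^ s * y := by
  let z : Subring.closure {ζ} := ⟨ζ, Subring.subset_closure rfl⟩
  have hz : z ^ p ^ k = 1 := Subtype.ext (by simpa using hζ.pow_eq_one)
  refine ⟨s * p ^ k, fun M hM => ?_⟩
  obtain ⟨y, hy⟩ := natCast_pow_dvd_eval₂_sub_sum hp hz ha hf hs hM
  refine ⟨y, y.2, ?_⟩
  simpa [Subring.coe_eval₂_intCast, z] using congrArg Subtype.val hy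

/-- Let `ζ ∈ ℂ` be a primitive `p^k`-th root of unity (`p` prime,
`k ≥ 1`), let `x ∈ Ẑ[q]^`, and let `a : ℕ → ℤ` be the coefficient sequence of
`ι₁(x) = Σ a_n t^n` (characterized by: for every `n` and every polynomial representative
`f` of `π_n(x)`, the series `Σ a_i t^i` agrees with `f(1+t)` modulo `t^n`).  Then
`Σ a_n (ζ-1)^n` converges `p`-adically in `ℤ[ζ]` to `ev_ζ(x)`: for every `s ≥ 1` there is
`N` such that for all `M ≥ N` the difference `ev_ζ(x) − Σ_{n<M} a_n (ζ-1)^n` lies in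
`p^s ℤ[ζ]`. -/
theorem habiro_padic_convergence_at_prime_power_root
    (p : ℕ) (hp : p.Prime) (k : ℕ) (hk : 1 ≤ k) (ζ : ℂ) (hζ : IsPrimitiveRoot ζ (p ^ k))
    (x : HabiroRing) (a : ℕ → ℤ)
    (ha : ∀ (n : ℕ) (f : Polynomial ℤ),
      habiroPi n x = Ideal.Quotient.mk (Ideal.span {qPoch n}) f →
      (PowerSeries.mk fun i => a i) -
        Polynomial.eval₂ (Int.castRingHom (PowerSeries ℤ)) (1 + PowerSeries.X) f ∈
          Ideal.span {(PowerSeries.X : PowerSeries ℤ) ^ n})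
    (f : Polynomial ℤ)
    (hf : habiroPi (p ^ k) x = Ideal.Quotient.mk (Ideal.span {qPoch (p ^ k)}) f)
    (s : ℕ) (hs : 1 ≤ s) :
    ∃ N : ℕ, ∀ M : ℕ, N ≤ M →
      ∃ y ∈ Subring.closure {ζ},
        Polynomial.eval₂ (Int.castRingHom ℂ) ζ f -
          ∑ n ∈ Finset.range M, (a n : ℂ) * (ζ - 1) ^ n = (p : ℂ) ^ s * y :=
  habiro_padic_convergence_at_prime_power_root_general p hp k ζ hζ x a ha f hf s hs
end
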